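/- arXiv:2605.11995 — 2 statements merged into one kernel-verified Lean document; each statement's English description precedes it below -/
import Mathlib

section
/- Fix p > 1. Define g(θ) = θ·J_p(θ)/I_p(θ) for θ > 0, where I_p(θ) = ∫_ℝ e^{−|x|^p − θ|x|^{2p−2}} dx and J_p(θ) = ∫_ℝ |x|^{p−2} e^{−|x|^p − θ|x|^{2p−2}} dx. Then g is strictly increasing on (0,∞). -/
open MeasureTheory Real Set Metric

noncomputable def itg (p s a c : ℝ) (x : ℝ) : ℝ :=
  |x| ^ s * Real.exp (-(a * |x| ^ p) - c * |x| ^ (2 * p - 2))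

lemma itg_meas (p s a c : ℝ) : AEStronglyMeasurable (itg p s a c) volume := by
  have m1 : Measurable fun x : ℝ => |x| ^ s := (measurable_id.abs).pow measurable_const
  have m2 : Measurable fun x : ℝ => |x| ^ p := (measurable_id.abs).pow measurable_const
  have m3 : Measurable fun x : ℝ => |x| ^ (2 * p - 2) := (measurable_id.abs).pow measurable_const
  exact (m1.mul (((m2.const_mul a).neg.sub (m3.const_mul c)).exp)).aestronglyMeasurable

lemma itg_nonneg (p s a c x : ℝ) : 0 ≤ itg p s a c x :=
  mul_nonneg (Real.rpow_nonneg (abs_nonneg x) s) (Real.exp_pos _).le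

lemma integrable_base {p s a : ℝ} (hp : 1 ≤ p) (hs : -1 < s) (ha : 0 < a) :
    Integrable (fun x : ℝ => |x| ^ s * Real.exp (-(a * |x| ^ p))) := by
  have hf : IntegrableOn (fun x : ℝ => x ^ s * Real.exp (-(a * x ^ p))) (Ioi 0) := by
    simpa [neg_mul] using integrableOn_rpow_mul_exp_neg_mul_rpow hs (by linarith) ha
  have hf' : IntegrableOn (fun x : ℝ => |x| ^ s * Real.exp (-(a * |x| ^ p))) (Ioi 0) := by
    refine hf.congr_fun (fun x hx => ?_) measurableSet_Ioi
    rw [abs_of_pos hx]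
  have hIic : IntegrableOn (fun x : ℝ => |x| ^ s * Real.exp (-(a * |x| ^ p))) (Iic 0) := by
    rw [← Measure.map_neg_eq_self (volume : Measure ℝ)]
    have m : MeasurableEmbedding fun x : ℝ => -x := (Homeomorph.neg ℝ).measurableEmbedding
    rw [m.integrableOn_map_iff]
    simp_rw [Function.comp_def, abs_neg, neg_preimage, neg_Iic, neg_zero]
    exact Iff.mpr integrableOn_Ici_iff_integrableOn_Ioi hf'
  rw [← integrableOn_univ, ← Iic_union_Ioi (a := (0:ℝ)), integrableOn_union]
  exact ⟨hIic, hf'⟩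

lemma itg_integrable {p s a c : ℝ} (hp : 1 ≤ p) (hs : -1 < s) (ha : 0 < a) (hc : 0 ≤ c) :
    Integrable (itg p s a c) := by
  refine (integrable_base hp hs ha).mono' (itg_meas p s a c) ?_
  filter_upwards with x
  rw [Real.norm_eq_abs, abs_of_nonneg (itg_nonneg p s a c x)]
  unfold itg
  refine mul_le_mul_of_nonneg_left ?_ (Real.rpow_nonneg (abs_nonneg x) s)
  apply Real.exp_le_exp.2
  have : 0 ≤ c * |x| ^ (2 * p - 2) := mul_nonneg hc (Real.rpow_nonneg (abs_nonneg x) _)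
  linarith

lemma itg_integral_pos {p s a c : ℝ} (hp : 1 ≤ p) (hs : -1 < s) (ha : 0 < a) (hc : 0 ≤ c) :
    0 < ∫ x, itg p s a c x := by
  rw [integral_pos_iff_support_of_nonneg (fun x => itg_nonneg p s a c x)
    (itg_integrable hp hs ha hc)]
  have hsub : Ioi (0:ℝ) ⊆ Function.support (itg p s a c) := by
    intro x hx
    have hx0 : 0 < |x| := abs_pos.2 (ne_of_gt hx)
    exact ne_of_gt (mul_pos (Real.rpow_pos_of_pos hx0 s) (Real.exp_pos _))
  calc (0:ENNReal) < volume (Ioi (0:ℝ)) := by simp [Real.volume_Ioi]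
    _ ≤ volume (Function.support (itg p s a c)) := measure_mono hsub

lemma ae_ne_zero : ∀ᵐ x : ℝ, x ≠ 0 := by
  rw [ae_iff]
  have : {x : ℝ | ¬ x ≠ 0} = {0} := by ext; simp
  rw [this]
  exact measure_singleton 0

/-- derivative with respect to the coefficient `c` of `|x| ^ (2p-2)` -/
lemma hasDerivAt_c {p s a c : ℝ} (hp : 1 < p) (hs : -1 < s) (ha : 0 < a) (hc : 0 < c) :
    HasDerivAt (fun c' => ∫ x, itg p s a c' x)
      (-∫ x, itg p (s + (2 * p - 2)) a c x) c := by
  have hq : (0:ℝ) < 2 * p - 2 := by linarith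
  have hsq : -1 < s + (2 * p - 2) := by linarith
  have key := hasDerivAt_integral_of_dominated_loc_of_deriv_le (μ := volume)
    (F := fun c' x => itg p s a c' x) (F' := fun c' x => -(itg p (s + (2 * p - 2)) a c' x))
    (x₀ := c) (bound := itg p (s + (2 * p - 2)) a (c / 2)) (s := ball c (c / 2))
    (ball_mem_nhds c (half_pos hc))
    (Filter.Eventually.of_forall fun c' => itg_meas p s a c')
    (itg_integrable hp.le hs ha hc.le)
    ((itg_meas p (s + (2 * p - 2)) a c).neg)
    ?_ (itg_integrable hp.le hsq ha (half_pos hc).le) ?_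
  · have h := key.2
    simp only [integral_neg] at h
    exact h
  · filter_upwards with x c' hc'
    rw [norm_neg, Real.norm_eq_abs, abs_of_nonneg (itg_nonneg _ _ _ _ _)]
    unfold itg
    refine mul_le_mul_of_nonneg_left ?_ (Real.rpow_nonneg (abs_nonneg x) _)
    apply Real.exp_le_exp.2
    have hc2 : c / 2 ≤ c' := by
      have := abs_lt.1 (mem_ball_iff_norm.1 hc'); linarith [this.1]
    have := mul_le_mul_of_nonneg_right hc2 (Real.rpow_nonneg (abs_nonneg x) (2 * p - 2))
    linarith
  · filter_upwards [ae_ne_zero] with x hx c' _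
    have hx0 : 0 < |x| := abs_pos.2 hx
    have h1 : HasDerivAt (fun c' : ℝ => c' * |x| ^ (2 * p - 2)) (|x| ^ (2 * p - 2)) c' := by
      simpa using (hasDerivAt_id c').mul_const (|x| ^ (2 * p - 2))
    have h2 := ((h1.const_sub (-(a * |x| ^ p))).exp).const_mul (|x| ^ s)
    have heq : |x| ^ s * (Real.exp (-(a * |x| ^ p) - c' * |x| ^ (2 * p - 2)) *
        -(|x| ^ (2 * p - 2))) = -(itg p (s + (2 * p - 2)) a c' x) := by
      unfold itg
      rw [Real.rpow_add hx0]
      ring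
    rw [heq] at h2
    exact h2

/-- derivative with respect to the coefficient `a` of `|x| ^ p` -/
lemma hasDerivAt_a {p s a c : ℝ} (hp : 1 < p) (hs : -1 < s) (ha : 0 < a) (hc : 0 ≤ c) :
    HasDerivAt (fun a' => ∫ x, itg p s a' c x)
      (-∫ x, itg p (s + p) a c x) a := by
  have hsp : -1 < s + p := by linarith
  have key := hasDerivAt_integral_of_dominated_loc_of_deriv_le (μ := volume)
    (F := fun a' x => itg p s a' c x) (F' := fun a' x => -(itg p (s + p) a' c x))
    (x₀ := a) (bound := itg p (s + p) (a / 2) c) (s := ball a (a / 2))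
    (ball_mem_nhds a (half_pos ha))
    (Filter.Eventually.of_forall fun a' => itg_meas p s a' c)
    (itg_integrable hp.le hs ha hc)
    ((itg_meas p (s + p) a c).neg)
    ?_ (itg_integrable hp.le hsp (half_pos ha) hc) ?_
  · have h := key.2
    simp only [integral_neg] at h
    exact h
  · filter_upwards with x a' ha'
    rw [norm_neg, Real.norm_eq_abs, abs_of_nonneg (itg_nonneg _ _ _ _ _)]
    unfold itg
    refine mul_le_mul_of_nonneg_left ?_ (Real.rpow_nonneg (abs_nonneg x) _)
    apply Real.exp_le_exp.2
    have ha2 : a / 2 ≤ a' := by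
      have := abs_lt.1 (mem_ball_iff_norm.1 ha'); linarith [this.1]
    have := mul_le_mul_of_nonneg_right ha2 (Real.rpow_nonneg (abs_nonneg x) p)
    linarith
  · filter_upwards [ae_ne_zero] with x hx a' _
    have hx0 : 0 < |x| := abs_pos.2 hx
    have h1 : HasDerivAt (fun a' : ℝ => a' * |x| ^ p) (|x| ^ p) a' := by
      simpa using (hasDerivAt_id a').mul_const (|x| ^ p)
    have h2 := (((h1.neg).sub_const (c * |x| ^ (2 * p - 2))).exp).const_mul (|x| ^ s)
    have heq : |x| ^ s * (Real.exp (-(a' * |x| ^ p) - c * |x| ^ (2 * p - 2)) *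
        -(|x| ^ p)) = -(itg p (s + p) a' c x) := by
      unfold itg
      rw [Real.rpow_add hx0]
      ring
    simp only [Pi.neg_apply] at h2
    rw [heq] at h2
    exact h2

/-- scaling substitution `x = t^(-1/p) y` -/
lemma itg_scaling {p : ℝ} (hp : 1 < p) (s θ : ℝ) {t : ℝ} (ht : 0 < t) :
    ∫ x, itg p s t θ x
      = t ^ (-((s + 1) / p)) * ∫ x, itg p s 1 (θ * t ^ (-((2 * p - 2) / p))) x := by
  have hp0 : (0:ℝ) < p := by linarith
  set a : ℝ := t ^ (p⁻¹) with ha_def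
  have ha : 0 < a := Real.rpow_pos_of_pos ht _
  set θ' : ℝ := θ * t ^ (-((2 * p - 2) / p)) with hθ'_def
  have key : ∀ x : ℝ, itg p s 1 θ' (a * x) = t ^ (s / p) * itg p s t θ x := by
    intro x
    unfold itg
    have habs : |a * x| = a * |x| := by rw [abs_mul, abs_of_pos ha]
    have hmul : ∀ r : ℝ, |a * x| ^ r = a ^ r * |x| ^ r := by
      intro r; rw [habs, Real.mul_rpow ha.le (abs_nonneg x)]
    have hap : a ^ p = t := by
      rw [ha_def, ← Real.rpow_mul ht.le, inv_mul_cancel₀ (ne_of_gt hp0), Real.rpow_one]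
    have haq : a ^ (2 * p - 2) = t ^ ((2 * p - 2) / p) := by
      rw [ha_def, ← Real.rpow_mul ht.le, div_eq_mul_inv, mul_comm (2 * p - 2)]
    have has : a ^ s = t ^ (s / p) := by
      rw [ha_def, ← Real.rpow_mul ht.le, div_eq_mul_inv, mul_comm s]
    rw [hmul, hmul, hmul, hap, haq, has, one_mul]
    have hθq : θ' * (t ^ ((2 * p - 2) / p) * |x| ^ (2 * p - 2)) = θ * |x| ^ (2 * p - 2) := by
      rw [hθ'_def]
      rw [show θ * t ^ (-((2 * p - 2) / p)) * (t ^ ((2 * p - 2) / p) * |x| ^ (2 * p - 2))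
          = θ * (t ^ (-((2 * p - 2) / p)) * t ^ ((2 * p - 2) / p)) * |x| ^ (2 * p - 2) by ring]
      rw [← Real.rpow_add ht, neg_add_cancel, Real.rpow_zero, mul_one]
    rw [mul_assoc, hθq]
  have hint := MeasureTheory.Measure.integral_comp_mul_left (itg p s 1 θ') a
  simp only [key] at hint
  rw [integral_const_mul] at hint
  -- hint : t ^ (s/p) * ∫ itg p s t θ = |a⁻¹| • ∫ itg p s 1 θ'
  rw [smul_eq_mul, abs_of_pos (inv_pos.2 ha)] at hint
  have hts : (0:ℝ) < t ^ (s / p) := Real.rpow_pos_of_pos ht _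
  have hainv : a⁻¹ = t ^ (-(p⁻¹)) := by
    rw [ha_def, ← Real.rpow_neg ht.le]
  have h1 : ∫ x, itg p s t θ x = t ^ (-(s / p)) * (t ^ (-p⁻¹) * ∫ x, itg p s 1 θ' x) := by
    rw [← hainv, ← hint, ← mul_assoc, Real.rpow_neg ht.le, inv_mul_cancel₀ (ne_of_gt hts), one_mul]
  rw [h1, ← mul_assoc, ← Real.rpow_add ht]
  congr 2
  field_simp
  ring

lemma itg_identity {p θ : ℝ} (hp : 1 < p) (hθ : 0 < θ) :
    (p - 1) * ∫ x, itg p (p - 2) 1 θ x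
      = p * (∫ x, itg p (2 * p - 2) 1 θ x)
        + (2 * p - 2) * θ * ∫ x, itg p (3 * p - 4) 1 θ x := by
  have hp0 : (0:ℝ) < p := by linarith
  have hs : (-1:ℝ) < p - 2 := by linarith
  have hLHS : HasDerivAt (fun t => ∫ x, itg p (p - 2) t θ x)
      (-∫ x, itg p (2 * p - 2) 1 θ x) 1 := by
    have := hasDerivAt_a (c := θ) (a := 1) hp hs one_pos hθ.le
    rw [show p - 2 + p = 2 * p - 2 by ring] at this
    exact this
  have hJ' : HasDerivAt (fun c => ∫ x, itg p (p - 2) 1 c x)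
      (-∫ x, itg p (3 * p - 4) 1 θ x) θ := by
    have := hasDerivAt_c (s := p - 2) (a := 1) hp hs one_pos hθ
    rw [show p - 2 + (2 * p - 2) = 3 * p - 4 by ring] at this
    exact this
  have hu1 : θ * (1:ℝ) ^ (-((2 * p - 2) / p)) = θ := by simp
  have hu : HasDerivAt (fun t : ℝ => θ * t ^ (-((2 * p - 2) / p)))
      (θ * (-((2 * p - 2) / p))) 1 := by
    have := (Real.hasDerivAt_rpow_const (x := (1:ℝ)) (p := -((2 * p - 2) / p))
      (Or.inl one_ne_zero)).const_mul θ
    simpa using this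
  have hv : HasDerivAt (fun t : ℝ => t ^ (-((p - 2 + 1) / p))) (-((p - 2 + 1) / p)) 1 := by
    have := Real.hasDerivAt_rpow_const (x := (1:ℝ)) (p := -((p - 2 + 1) / p))
      (Or.inl one_ne_zero)
    simpa using this
  have hJu : HasDerivAt (fun c => ∫ x, itg p (p - 2) 1 c x)
      (-∫ x, itg p (3 * p - 4) 1 θ x) (θ * (1:ℝ) ^ (-((2 * p - 2) / p))) := by
    rw [hu1]; exact hJ'
  have hcomp : HasDerivAt
      (fun t : ℝ => ∫ x, itg p (p - 2) 1 (θ * t ^ (-((2 * p - 2) / p))) x)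
      ((-∫ x, itg p (3 * p - 4) 1 θ x) * (θ * (-((2 * p - 2) / p)))) 1 :=
    by have := HasDerivAt.comp 1 hJu hu; exact this
  have hprod := hv.mul hcomp
  have heq : (fun t => ∫ x, itg p (p - 2) t θ x)
      =ᶠ[nhds 1] fun t : ℝ => t ^ (-((p - 2 + 1) / p)) *
        ∫ x, itg p (p - 2) 1 (θ * t ^ (-((2 * p - 2) / p))) x := by
    filter_upwards [eventually_gt_nhds zero_lt_one] with t ht
    exact itg_scaling hp (p - 2) θ ht
  have hRHS := hprod.congr_of_eventuallyEq heq
  have huniq := hLHS.unique hRHS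
  rw [hu1] at huniq
  simp only [Real.one_rpow, one_mul] at huniq
  have hpne : p ≠ 0 := ne_of_gt hp0
  field_simp at huniq
  rw [show (2 * (p - 1)) = 2 * p - 2 by ring, show p * 3 - 4 = 3 * p - 4 by ring] at huniq
  linear_combination huniq

theorem g_strictMonoOn (p : ℝ) (hp : 1 < p) :
    StrictMonoOn (fun θ : ℝ =>
      θ * (∫ x : ℝ, |x| ^ (p - 2) * Real.exp (-|x| ^ p - θ * |x| ^ (2 * p - 2))) /
        (∫ x : ℝ, Real.exp (-|x| ^ p - θ * |x| ^ (2 * p - 2)))) (Set.Ioi 0) := by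
  have hs0 : (-1:ℝ) < 0 := by norm_num
  have hsJ : (-1:ℝ) < p - 2 := by linarith
  have hsL : (-1:ℝ) < 2 * p - 2 := by linarith
  have hsM : (-1:ℝ) < 3 * p - 4 := by linarith
  have hfun : (fun θ : ℝ =>
      θ * (∫ x : ℝ, |x| ^ (p - 2) * Real.exp (-|x| ^ p - θ * |x| ^ (2 * p - 2))) /
        (∫ x : ℝ, Real.exp (-|x| ^ p - θ * |x| ^ (2 * p - 2))))
      = fun θ : ℝ => θ * (∫ x, itg p (p - 2) 1 θ x) / ∫ x, itg p 0 1 θ x := by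
    funext θ
    have h1 : (∫ x : ℝ, |x| ^ (p - 2) * Real.exp (-|x| ^ p - θ * |x| ^ (2 * p - 2)))
        = ∫ x, itg p (p - 2) 1 θ x := by
      refine integral_congr_ae (Filter.Eventually.of_forall fun x => ?_)
      simp [itg, one_mul]
    have h2 : (∫ x : ℝ, Real.exp (-|x| ^ p - θ * |x| ^ (2 * p - 2)))
        = ∫ x, itg p 0 1 θ x := by
      refine integral_congr_ae (Filter.Eventually.of_forall fun x => ?_)
      simp [itg, Real.rpow_zero, one_mul]
    rw [h1, h2]
  rw [hfun]
  have key : ∀ θ ∈ Set.Ioi (0:ℝ),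
      HasDerivAt (fun θ : ℝ => θ * (∫ x, itg p (p - 2) 1 θ x) / ∫ x, itg p 0 1 θ x)
      ((((∫ x, itg p (p - 2) 1 θ x) + θ * -(∫ x, itg p (3 * p - 4) 1 θ x))
          * (∫ x, itg p 0 1 θ x)
        - θ * (∫ x, itg p (p - 2) 1 θ x) * -(∫ x, itg p (2 * p - 2) 1 θ x))
        / (∫ x, itg p 0 1 θ x) ^ 2) θ := by
    intro θ hθ
    rw [Set.mem_Ioi] at hθ
    have hJd : HasDerivAt (fun c => ∫ x, itg p (p - 2) 1 c x)
        (-(∫ x, itg p (3 * p - 4) 1 θ x)) θ := by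
      have := hasDerivAt_c (s := p - 2) (a := 1) hp hsJ one_pos hθ
      rw [show p - 2 + (2 * p - 2) = 3 * p - 4 by ring] at this
      exact this
    have hId : HasDerivAt (fun c => ∫ x, itg p 0 1 c x)
        (-(∫ x, itg p (2 * p - 2) 1 θ x)) θ := by
      have := hasDerivAt_c (s := 0) (a := 1) hp hs0 one_pos hθ
      rw [show (0:ℝ) + (2 * p - 2) = 2 * p - 2 by ring] at this
      exact this
    have hIne : (∫ x, itg p 0 1 θ x) ≠ 0 :=
      ne_of_gt (itg_integral_pos hp.le hs0 one_pos hθ.le)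
    have := ((hasDerivAt_id θ).mul hJd).div hId hIne
    simp at this ⊢; exact this
  have hpos : ∀ θ ∈ Set.Ioi (0:ℝ),
      0 < ((((∫ x, itg p (p - 2) 1 θ x) + θ * -(∫ x, itg p (3 * p - 4) 1 θ x))
          * (∫ x, itg p 0 1 θ x)
        - θ * (∫ x, itg p (p - 2) 1 θ x) * -(∫ x, itg p (2 * p - 2) 1 θ x))
        / (∫ x, itg p 0 1 θ x) ^ 2) := by
    intro θ hθ
    rw [Set.mem_Ioi] at hθ
    have hI : 0 < ∫ x, itg p 0 1 θ x := itg_integral_pos hp.le hs0 one_pos hθ.le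
    have hJ : 0 < ∫ x, itg p (p - 2) 1 θ x := itg_integral_pos hp.le hsJ one_pos hθ.le
    have hL : 0 < ∫ x, itg p (2 * p - 2) 1 θ x := itg_integral_pos hp.le hsL one_pos hθ.le
    have hM : 0 < ∫ x, itg p (3 * p - 4) 1 θ x := itg_integral_pos hp.le hsM one_pos hθ.le
    have hid := itg_identity hp hθ
    apply div_pos ?_ (pow_pos hI 2)
    have hpos1 : 0 < (∫ x, itg p (p - 2) 1 θ x) - θ * ∫ x, itg p (3 * p - 4) 1 θ x := by
      have hq : (0:ℝ) < 2 * (p - 1) := by linarith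
      rw [show (∫ x, itg p (p - 2) 1 θ x) - θ * ∫ x, itg p (3 * p - 4) 1 θ x
          = ((p - 1) * (∫ x, itg p (p - 2) 1 θ x) + p * (∫ x, itg p (2 * p - 2) 1 θ x))
            / (2 * (p - 1)) by
        rw [eq_div_iff (ne_of_gt hq)]
        linear_combination hid]
      apply div_pos ?_ hq
      have h1 := mul_pos (show (0:ℝ) < p - 1 by linarith) hJ
      have h2 := mul_pos (show (0:ℝ) < p by linarith) hL
      linarith
    nlinarith [mul_pos hpos1 hI, mul_pos hθ (mul_pos hJ hL)]
  refine strictMonoOn_of_deriv_pos (convex_Ioi 0) ?_ ?_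
  · intro θ hθ
    exact ((key θ hθ).differentiableAt).continuousAt.continuousWithinAt
  · intro θ hθ
    rw [interior_Ioi] at hθ
    rw [(key θ hθ).deriv]
    exact hpos θ hθ
end

section
/- Fix p > 1 and β ∈ (0,1). The function Ψ(θ) = ((1−β)/2)·log θ + β·log I_p(θ) + (1−β)·log J_p(θ) on (0,∞) attains its supremum, and its unique global maximizer θ* ∈ (0,∞) is characterized by the equation θ*·J_p(θ*)/I_p(θ*) = (1−β)p/(2(p−1)β). -/
/-!
Write `M_s(θ) = ∫ |x|^s e^{-|x|^p - θ|x|^{2p-2}} dx`, so `I = M_0` and `J = M_{p-2}`.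
Differentiating under the integral gives `M_s' = -M_{s+2p-2}`, and integrating `(x^{p-1} e^{…})'`
over `(0, ∞)` gives `(p - 1) J = p M_{2p-2} + 2θ(p - 1) M_{3p-4}`. Eliminating `M_{3p-4}` with this
identity, `Ψ'(θ) = -M_{2p-2}(θ) B(θ) / (θ I J)` with the balance
`B(θ) = β θ J(θ) - (1-β)p/(2(p-1)) I(θ)`.
Since `I` decreases and, by the same identity, `θ J(θ)` increases, `B` is strictly increasing;
it is negative near `0` and positive near `∞` (where `I → 0`). So `B` has a unique zero `θ*`,
`Ψ` increases on `(0, θ*]` and decreases on `[θ*, ∞)`, and `B(θ) = 0` is the stated equation.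
-/

open MeasureTheory Real Set Filter Topology

lemma integrable_comp_abs_of_integrableOn_Ioi {f : ℝ → ℝ} (hf : IntegrableOn f (Ioi 0)) :
    Integrable fun x => f |x| := by
  have hIoi : IntegrableOn (fun x => f |x|) (Ioi 0) :=
    hf.congr_fun (fun x hx => by rw [abs_of_pos hx]) measurableSet_Ioi
  have hIic : IntegrableOn (fun x => f |x|) (Iic 0) := by
    have hneg : MeasurableEmbedding fun x : ℝ => -x := (Homeomorph.neg ℝ).measurableEmbedding
    rw [← Measure.map_neg_eq_self (volume : Measure ℝ), hneg.integrableOn_map_iff]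
    simp_rw [Function.comp_def, abs_neg, neg_preimage, neg_Iic, neg_zero]
    exact (integrableOn_Ici_iff_integrableOn_Ioi).mpr hIoi
  rw [← integrableOn_univ, ← Iic_union_Ioi (a := (0 : ℝ)), integrableOn_union]
  exact ⟨hIic, hIoi⟩

lemma apply_lt_of_deriv_pos_of_deriv_neg {Φ Φ' : ℝ → ℝ} {a b : ℝ} (hab : a < b)
    (hΦ : ∀ x ∈ Ioi a, HasDerivAt Φ (Φ' x) x)
    (hleft : ∀ x ∈ Ioo a b, 0 < Φ' x) (hright : ∀ x ∈ Ioi b, Φ' x < 0)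
    {x : ℝ} (hx : a < x) (hne : x ≠ b) : Φ x < Φ b := by
  rcases hne.lt_or_gt with hxb | hbx
  · refine strictMonoOn_of_deriv_pos (convex_Ioc a b)
      (fun y hy => (hΦ y hy.1).continuousAt.continuousWithinAt) (fun y hy => ?_)
      ⟨hx, hxb.le⟩ ⟨hab, le_rfl⟩ hxb
    rw [interior_Ioc] at hy
    rw [(hΦ y hy.1).deriv]
    exact hleft y hy
  · refine strictAntiOn_of_deriv_neg (convex_Ici b)
      (fun y hy => (hΦ y (hab.trans_le hy)).continuousAt.continuousWithinAt) (fun y hy => ?_)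
      self_mem_Ici hbx.le hbx
    rw [interior_Ici] at hy
    rw [(hΦ y (hab.trans hy)).deriv]
    exact hright y hy

namespace PhaseFunction

noncomputable def weight (p θ x : ℝ) : ℝ := exp (-x ^ p - θ * x ^ (2 * p - 2))

noncomputable def moment (p s θ : ℝ) : ℝ := ∫ x : ℝ, |x| ^ s * weight p θ |x|

lemma weight_pos (p θ x : ℝ) : 0 < weight p θ x := exp_pos _

lemma weight_le_weight {p θ₁ θ₂ x : ℝ} (hθ : θ₁ ≤ θ₂) (hx : 0 ≤ x) :
    weight p θ₂ x ≤ weight p θ₁ x :=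
  exp_le_exp.2 (by nlinarith [rpow_nonneg hx (2 * p - 2)])

lemma measurable_rpow_mul_weight (p s θ : ℝ) : Measurable fun x : ℝ => x ^ s * weight p θ x := by
  unfold weight
  fun_prop

lemma aestronglyMeasurable_abs_rpow_mul_weight (p s θ : ℝ) :
    AEStronglyMeasurable fun x : ℝ => |x| ^ s * weight p θ |x| :=
  ((measurable_rpow_mul_weight p s θ).comp measurable_abs).aestronglyMeasurable

lemma norm_abs_rpow_mul_weight_le {p s θ₁ θ₂ : ℝ} (hθ : θ₁ ≤ θ₂) (x : ℝ) :
    ‖|x| ^ s * weight p θ₂ |x|‖ ≤ |x| ^ s * weight p θ₁ |x| := by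
  rw [norm_of_nonneg (mul_nonneg (rpow_nonneg (abs_nonneg x) _) (weight_pos _ _ _).le)]
  exact mul_le_mul_of_nonneg_left (weight_le_weight hθ (abs_nonneg x)) (by positivity)

lemma integrableOn_Ioi_rpow_mul_weight {p s θ : ℝ} (hp : 0 < p) (hs : -1 < s) (hθ : 0 ≤ θ) :
    IntegrableOn (fun x : ℝ => x ^ s * weight p θ x) (Ioi 0) := by
  refine (integrableOn_rpow_mul_exp_neg_rpow hs hp).mono'
    (measurable_rpow_mul_weight p s θ).aestronglyMeasurable ?_
  filter_upwards [ae_restrict_mem measurableSet_Ioi] with x (hx : 0 < x)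
  rw [norm_of_nonneg (mul_nonneg (rpow_nonneg hx.le s) (weight_pos p θ x).le)]
  gcongr
  simpa [weight] using weight_le_weight (p := p) hθ hx.le

lemma integrable_abs_rpow_mul_weight {p s θ : ℝ} (hp : 0 < p) (hs : -1 < s) (hθ : 0 ≤ θ) :
    Integrable fun x : ℝ => |x| ^ s * weight p θ |x| :=
  integrable_comp_abs_of_integrableOn_Ioi (integrableOn_Ioi_rpow_mul_weight hp hs hθ)

lemma moment_eq_two_mul_integral_Ioi (p s θ : ℝ) :
    moment p s θ = 2 * ∫ x in Ioi (0 : ℝ), x ^ s * weight p θ x :=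
  integral_comp_abs (f := fun x => x ^ s * weight p θ x)

lemma moment_pos {p s θ : ℝ} (hp : 0 < p) (hs : -1 < s) (hθ : 0 ≤ θ) : 0 < moment p s θ := by
  rw [moment, integral_pos_iff_support_of_nonneg
    (fun x => mul_nonneg (rpow_nonneg (abs_nonneg x) s) (weight_pos _ _ _).le)
    (integrable_abs_rpow_mul_weight hp hs hθ)]
  refine (by simp : 0 < volume (Ioi (0 : ℝ))).trans_le (measure_mono fun x (hx : 0 < x) => ?_)
  exact (mul_pos (rpow_pos_of_pos (abs_pos.2 hx.ne') s) (weight_pos _ _ _)).ne'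

lemma moment_antitoneOn {p s : ℝ} (hp : 0 < p) (hs : -1 < s) : AntitoneOn (moment p s) (Ici 0) :=
  fun _ h₁ _ h₂ h₁₂ => integral_mono (integrable_abs_rpow_mul_weight hp hs h₂)
    (integrable_abs_rpow_mul_weight hp hs h₁) fun x =>
      (le_norm_self _).trans (norm_abs_rpow_mul_weight_le h₁₂ x)

lemma hasDerivAt_moment {p s θ : ℝ} (hp : 1 < p) (hs : -1 < s) (hθ : 0 < θ) :
    HasDerivAt (moment p s) (-moment p (s + (2 * p - 2)) θ) θ := by
  have hp0 : 0 < p := by linarith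
  have key := hasDerivAt_integral_of_dominated_loc_of_deriv_le (μ := volume)
    (F := fun t x => |x| ^ s * weight p t |x|)
    (F' := fun t x => -(|x| ^ (s + (2 * p - 2)) * weight p t |x|))
    (bound := fun x => |x| ^ (s + (2 * p - 2)) * weight p 0 |x|)
    (Metric.ball_mem_nhds θ hθ)
    (.of_forall fun t => aestronglyMeasurable_abs_rpow_mul_weight p s t)
    (integrable_abs_rpow_mul_weight hp0 hs hθ.le)
    (aestronglyMeasurable_abs_rpow_mul_weight p _ θ).neg
    ?_ (integrable_abs_rpow_mul_weight hp0 (by linarith) le_rfl) ?_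
  · exact key.2.congr_deriv (integral_neg _)
  · refine .of_forall fun x t ht => ?_
    have ht : 0 ≤ t := by
      rw [Metric.mem_ball, Real.dist_eq, abs_lt] at ht
      linarith
    exact (norm_neg _).trans_le (norm_abs_rpow_mul_weight_le ht x)
  · filter_upwards [Measure.ae_ne volume 0] with x hx t _
    have hexp : HasDerivAt (fun t => -|x| ^ p - t * |x| ^ (2 * p - 2)) (-|x| ^ (2 * p - 2)) t := by
      simpa using ((hasDerivAt_id t).mul_const (|x| ^ (2 * p - 2))).const_sub (-|x| ^ p)
    refine (hexp.exp.const_mul (|x| ^ s)).congr_deriv ?_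
    rw [weight, rpow_add (abs_pos.2 hx)]
    ring

lemma hasDerivAt_moment_of_add_eq {p s t θ : ℝ} (hp : 1 < p) (hs : -1 < s) (hθ : 0 < θ)
    (ht : s + (2 * p - 2) = t) : HasDerivAt (moment p s) (-moment p t θ) θ :=
  ht ▸ hasDerivAt_moment hp hs hθ

lemma moment_strictAntiOn {p s : ℝ} (hp : 1 < p) (hs : -1 < s) :
    StrictAntiOn (moment p s) (Ioi 0) :=
  strictAntiOn_of_deriv_neg (convex_Ioi 0)
    (fun _ hθ => (hasDerivAt_moment hp hs hθ).continuousAt.continuousWithinAt) fun θ hθ => by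
      rw [interior_Ioi] at hθ
      rw [(hasDerivAt_moment hp hs hθ).deriv, neg_lt_zero]
      exact moment_pos (by linarith) (by linarith) hθ.le

lemma tendsto_moment_atTop {p s : ℝ} (hp : 0 < p) (hs : -1 < s) :
    Tendsto (moment p s) atTop (𝓝 0) := by
  have key := tendsto_integral_filter_of_dominated_convergence (μ := volume) (l := atTop)
    (F := fun θ x => |x| ^ s * weight p θ |x|) (f := fun _ => 0)
    (bound := fun x => |x| ^ s * weight p 0 |x|)
    (.of_forall fun θ => aestronglyMeasurable_abs_rpow_mul_weight p s θ) ?_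
    (integrable_abs_rpow_mul_weight hp hs le_rfl) ?_
  · rwa [integral_zero] at key
  · filter_upwards [eventually_ge_atTop 0] with θ hθ
    exact .of_forall (norm_abs_rpow_mul_weight_le hθ)
  · filter_upwards [Measure.ae_ne volume 0] with x hx
    have hexponent : Tendsto (fun θ => -|x| ^ p - θ * |x| ^ (2 * p - 2)) atTop atBot :=
      tendsto_atBot_add_const_left _ _
        (tendsto_neg_atTop_atBot.comp
          (tendsto_id.atTop_mul_const (rpow_pos_of_pos (abs_pos.2 hx) _)))
    simpa [weight] using (tendsto_exp_atBot.comp hexponent).const_mul (|x| ^ s)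

lemma hasDerivAt_rpow_mul_weight {p θ x : ℝ} (hx : 0 < x) :
    HasDerivAt (fun y => y ^ (p - 1) * weight p θ y)
      ((p - 1) * (x ^ (p - 2) * weight p θ x) - p * (x ^ (2 * p - 2) * weight p θ x)
        - θ * (2 * p - 2) * (x ^ (3 * p - 4) * weight p θ x)) x := by
  have hpow : ∀ q : ℝ, HasDerivAt (fun y => y ^ q) (q * x ^ (q - 1)) x :=
    fun q => hasDerivAt_rpow_const (Or.inl hx.ne')
  have hweight : HasDerivAt (weight p θ)
      (weight p θ x * (-(p * x ^ (p - 1)) - θ * ((2 * p - 2) * x ^ (2 * p - 2 - 1)))) x :=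
    ((hpow p).neg.fun_sub ((hpow (2 * p - 2)).const_mul θ)).exp
  refine ((hpow (p - 1)).mul hweight).congr_deriv ?_
  have e₁ : x ^ (p - 1) * x ^ (p - 1) = x ^ (2 * p - 2) := by rw [← rpow_add hx]; ring_nf
  have e₂ : x ^ (p - 1) * x ^ (2 * p - 2 - 1) = x ^ (3 * p - 4) := by rw [← rpow_add hx]; ring_nf
  rw [← e₁, ← e₂, show p - 1 - 1 = p - 2 by ring]
  ring

lemma tendsto_rpow_mul_weight_atTop {p θ : ℝ} (hp : 1 < p) (hθ : 0 ≤ θ) :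
    Tendsto (fun x => x ^ (p - 1) * weight p θ x) atTop (𝓝 0) := by
  have hexp : Tendsto (fun x => exp (-(1 / 2) * x)) atTop (𝓝 0) := by
    simpa [Function.comp_def, neg_mul] using
      tendsto_exp_neg_atTop_nhds_zero.comp (tendsto_id.const_mul_atTop one_half_pos)
  have hdecay : Tendsto (fun x => x ^ (p - 1) * exp (-1 * x ^ p)) atTop (𝓝 0) :=
    (rpow_mul_exp_neg_mul_rpow_isLittleO_exp_neg (p - 1) hp one_pos).isBigO.trans_tendsto hexp
  refine squeeze_zero' ?_ ?_ hdecay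
  · filter_upwards [eventually_ge_atTop 0] with x hx
    exact mul_nonneg (rpow_nonneg hx _) (weight_pos _ _ _).le
  · filter_upwards [eventually_ge_atTop 0] with x hx
    simpa [weight] using
      mul_le_mul_of_nonneg_left (weight_le_weight (p := p) hθ hx) (rpow_nonneg hx (p - 1))

lemma moment_integration_by_parts {p θ : ℝ} (hp : 1 < p) (hθ : 0 ≤ θ) :
    (p - 1) * moment p (p - 2) θ =
      p * moment p (2 * p - 2) θ + 2 * θ * (p - 1) * moment p (3 * p - 4) θ := by
  have hp0 : 0 < p := by linarith
  have h₁ := integrableOn_Ioi_rpow_mul_weight hp0 (s := p - 2) (by linarith) hθ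
  have h₂ := integrableOn_Ioi_rpow_mul_weight hp0 (s := 2 * p - 2) (by linarith) hθ
  have h₃ := integrableOn_Ioi_rpow_mul_weight hp0 (s := 3 * p - 4) (by linarith) hθ
  have hcont : ContinuousWithinAt (fun y => y ^ (p - 1) * weight p θ y) (Ici 0) 0 := by
    unfold weight
    fun_prop (disch := linarith)
  have key := integral_Ioi_of_hasDerivAt_of_tendsto hcont
    (fun x hx => hasDerivAt_rpow_mul_weight hx)
    (((h₁.const_mul (p - 1)).sub (h₂.const_mul p)).sub (h₃.const_mul _))
    (tendsto_rpow_mul_weight_atTop hp hθ)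
  rw [integral_sub ?_ (h₃.const_mul _), integral_sub (h₁.const_mul _) (h₂.const_mul _),
    integral_const_mul, integral_const_mul, integral_const_mul, zero_rpow (by linarith), zero_mul,
    sub_zero] at key
  · simp only [moment_eq_two_mul_integral_Ioi]
    linear_combination 2 * key
  · exact (h₁.const_mul _).sub (h₂.const_mul _)

lemma strictMonoOn_mul_moment {p : ℝ} (hp : 1 < p) :
    StrictMonoOn (fun θ => θ * moment p (p - 2) θ) (Ioi 0) := by
  have hderiv : ∀ θ ∈ Ioi (0 : ℝ), HasDerivAt (fun θ => θ * moment p (p - 2) θ)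
      (1 * moment p (p - 2) θ + θ * -moment p (3 * p - 4) θ) θ := fun θ hθ =>
    (hasDerivAt_id θ).mul (hasDerivAt_moment_of_add_eq hp (by linarith) hθ (by ring))
  refine strictMonoOn_of_deriv_pos (convex_Ioi 0)
    (fun θ hθ => (hderiv θ hθ).continuousAt.continuousWithinAt) fun θ hθ => ?_
  rw [interior_Ioi] at hθ
  rw [(hderiv θ hθ).deriv]
  have hJ := moment_pos (p := p) (s := p - 2) (by linarith) (by linarith) hθ.le
  have hK := moment_pos (p := p) (s := 2 * p - 2) (by linarith) (by linarith) hθ.le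
  have hibp := moment_integration_by_parts hp hθ.le
  -- by the integration by parts, `(p - 1) (J - θ M_{3p-4}) = ((p - 1) J + p M_{2p-2}) / 2`
  have : 0 < (p - 1) * (1 * moment p (p - 2) θ + θ * -moment p (3 * p - 4) θ) := by
    nlinarith [mul_pos (sub_pos.2 hp) hJ, mul_pos (zero_lt_one.trans hp) hK]
  exact pos_of_mul_pos_right this (by linarith)

noncomputable def phase (p β θ : ℝ) : ℝ :=
  (1 - β) / 2 * log θ + β * log (moment p 0 θ) + (1 - β) * log (moment p (p - 2) θ)

noncomputable def balance (p β θ : ℝ) : ℝ :=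
  β * (θ * moment p (p - 2) θ) - (1 - β) * p / (2 * (p - 1)) * moment p 0 θ

lemma hasDerivAt_phase {p β θ : ℝ} (hp : 1 < p) (hθ : 0 < θ) :
    HasDerivAt (phase p β)
      (-moment p (2 * p - 2) θ * balance p β θ / (θ * moment p 0 θ * moment p (p - 2) θ)) θ := by
  have hI := moment_pos (p := p) (s := 0) (by linarith) (by norm_num) hθ.le
  have hJ := moment_pos (p := p) (s := p - 2) (by linarith) (by linarith) hθ.le
  have dI := hasDerivAt_moment_of_add_eq (s := 0) (t := 2 * p - 2) hp (by norm_num) hθ (by ring)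
  have dJ := hasDerivAt_moment_of_add_eq (s := p - 2) (t := 3 * p - 4) hp (by linarith) hθ (by ring)
  refine ((((hasDerivAt_log hθ.ne').const_mul ((1 - β) / 2)).add ((dI.log hI.ne').const_mul β)).add
    ((dJ.log hJ.ne').const_mul (1 - β))).congr_deriv ?_
  have hibp := moment_integration_by_parts hp hθ.le
  have hp1 : p - 1 ≠ 0 := by linarith
  rw [balance]
  generalize moment p 0 θ = I at hI hibp ⊢
  generalize moment p (p - 2) θ = J at hJ hibp ⊢
  generalize moment p (2 * p - 2) θ = K at hibp ⊢
  generalize moment p (3 * p - 4) θ = L at hibp ⊢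
  field_simp
  linear_combination (1 - β) * I * hibp

lemma balance_strictMonoOn {p β : ℝ} (hp : 1 < p) (hβ₀ : 0 < β) (hβ₁ : β ≤ 1) :
    StrictMonoOn (balance p β) (Ioi 0) := fun a ha b hb hab => by
  have hc : 0 ≤ (1 - β) * p / (2 * (p - 1)) :=
    div_nonneg (mul_nonneg (by linarith) (by linarith)) (by linarith)
  have hJ := mul_lt_mul_of_pos_left (strictMonoOn_mul_moment hp ha hb hab) hβ₀
  have hI :=
    mul_le_mul_of_nonneg_left (moment_strictAntiOn hp (s := 0) (by norm_num) ha hb hab).le hc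
  simp only [balance]
  linarith

lemma continuousOn_balance {p β : ℝ} (hp : 1 < p) : ContinuousOn (balance p β) (Ioi 0) :=
  fun θ hθ =>
    ((continuousAt_const.mul (continuousAt_id.mul
      (hasDerivAt_moment (s := p - 2) hp (by linarith) hθ).continuousAt)).sub
    (continuousAt_const.mul
      (hasDerivAt_moment (s := 0) hp (by norm_num) hθ).continuousAt)).continuousWithinAt

lemma exists_balance_neg {p β : ℝ} (hp : 1 < p) (hβ : β ∈ Ioo 0 1) :
    ∃ θ ∈ Ioi 0, balance p β θ < 0 := by
  set c := (1 - β) * p / (2 * (p - 1))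
  have hc : 0 < c := div_pos (mul_pos (by linarith [hβ.2]) (by linarith)) (by linarith)
  have hI₁ := moment_pos (p := p) (s := 0) (by linarith) (by norm_num) zero_le_one
  have hsmall : Tendsto (fun θ => β * (θ * moment p (p - 2) 0)) (𝓝[>] 0) (𝓝 0) := by
    exact ((by fun_prop : Continuous fun θ : ℝ => β * (θ * moment p (p - 2) 0)).tendsto' 0 0
      (by simp)).mono_left nhdsWithin_le_nhds
  obtain ⟨θ, ⟨hθ₁, hθ⟩, hθ₀⟩ :=
    ((eventually_nhdsWithin_of_eventually_nhds (eventually_le_nhds one_pos)).and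
      (hsmall.eventually_lt_const (mul_pos hc hI₁))).and self_mem_nhdsWithin |>.exists
  refine ⟨θ, hθ₀, ?_⟩
  have hJ := moment_antitoneOn (p := p) (s := p - 2) (by linarith) (by linarith)
    self_mem_Ici hθ₀.le hθ₀.le
  have hI := moment_antitoneOn (p := p) (s := 0) (by linarith) (by norm_num)
    hθ₀.le (mem_Ici.2 zero_le_one) hθ₁
  have := mul_le_mul_of_nonneg_left (mul_le_mul_of_nonneg_left hJ hθ₀.le) hβ.1.le
  have := mul_le_mul_of_nonneg_left hI hc.le
  simp only [balance]
  linarith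

lemma exists_balance_pos {p β : ℝ} (hp : 1 < p) (hβ : 0 < β) :
    ∃ θ ∈ Ioi 0, 0 < balance p β θ := by
  set c := (1 - β) * p / (2 * (p - 1))
  have hJ₁ := moment_pos (p := p) (s := p - 2) (by linarith) (by linarith) zero_le_one
  have hsmall : Tendsto (fun θ => c * moment p 0 θ) atTop (𝓝 0) := by
    simpa using (tendsto_moment_atTop (p := p) (s := 0) (by linarith) (by norm_num)).const_mul c
  obtain ⟨θ, hθ₁, hθ⟩ := ((eventually_ge_atTop 1).and
    (hsmall.eventually_lt_const (mul_pos hβ (one_mul (moment p (p - 2) 1) ▸ hJ₁)))).exists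
  refine ⟨θ, zero_lt_one.trans_le hθ₁, ?_⟩
  have hθJ := (strictMonoOn_mul_moment hp).monotoneOn (mem_Ioi.2 one_pos)
    (zero_lt_one.trans_le hθ₁) hθ₁
  have := mul_le_mul_of_nonneg_left hθJ hβ.le
  simp only [balance]
  linarith

lemma exists_balance_eq_zero {p β : ℝ} (hp : 1 < p) (hβ : β ∈ Ioo 0 1) :
    ∃ θ ∈ Ioi 0, balance p β θ = 0 := by
  obtain ⟨a, ha, hneg⟩ := exists_balance_neg hp hβ
  obtain ⟨b, hb, hpos⟩ := exists_balance_pos hp hβ.1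
  exact isPreconnected_Ioi.intermediate_value ha hb (continuousOn_balance hp) ⟨hneg.le, hpos.le⟩

lemma phase_lt_phase_of_balance_eq_zero {p β θ θ₀ : ℝ} (hp : 1 < p) (hβ₀ : 0 < β) (hβ₁ : β ≤ 1)
    (hθ₀ : 0 < θ₀) (hzero : balance p β θ₀ = 0) (hθ : 0 < θ) (hne : θ ≠ θ₀) :
    phase p β θ < phase p β θ₀ := by
  have hmono := balance_strictMonoOn hp hβ₀ hβ₁
  have hK {θ : ℝ} (hθ : 0 < θ) : -moment p (2 * p - 2) θ < 0 :=
    neg_lt_zero.2 (moment_pos (by linarith) (by linarith) hθ.le)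
  have hIJ {θ : ℝ} (hθ : 0 < θ) : 0 < θ * moment p 0 θ * moment p (p - 2) θ :=
    mul_pos (mul_pos hθ (moment_pos (by linarith) (by norm_num) hθ.le))
      (moment_pos (by linarith) (by linarith) hθ.le)
  refine apply_lt_of_deriv_pos_of_deriv_neg hθ₀ (fun θ hθ => hasDerivAt_phase hp hθ)
    (fun θ hθ => ?_) (fun θ hθ => ?_) hθ hne
  · have hneg : balance p β θ < 0 := hzero ▸ hmono hθ.1 hθ₀ hθ.2
    exact div_pos (mul_pos_of_neg_of_neg (hK hθ.1) hneg) (hIJ hθ.1)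
  · have hpos : 0 < balance p β θ := hzero ▸ hmono hθ₀ (hθ₀.trans hθ) hθ
    exact div_neg_of_neg_of_pos (mul_neg_of_neg_of_pos (hK (hθ₀.trans hθ)) hpos)
      (hIJ (hθ₀.trans hθ))

lemma balance_eq_zero_iff {p β θ : ℝ} (hp : 1 < p) (hβ : 0 < β) (hθ : 0 < θ) :
    balance p β θ = 0 ↔
      θ * moment p (p - 2) θ / moment p 0 θ = (1 - β) * p / (2 * (p - 1) * β) := by
  have hI := moment_pos (p := p) (s := 0) (by linarith) (by norm_num) hθ.le
  rw [balance, sub_eq_zero, div_eq_div_iff hI.ne' (by positivity), div_mul_eq_mul_div,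
    eq_div_iff (by positivity)]
  constructor <;> intro h <;> linear_combination h

end PhaseFunction

open PhaseFunction

theorem phase_function_maximizer (p β : ℝ) (hp : 1 < p) (hβ : β ∈ Set.Ioo (0 : ℝ) 1)
    (I J Ψ : ℝ → ℝ)
    (hI : ∀ θ : ℝ, I θ = ∫ x : ℝ, Real.exp (-|x| ^ p - θ * |x| ^ (2 * p - 2)))
    (hJ : ∀ θ : ℝ, J θ = ∫ x : ℝ, |x| ^ (p - 2) * Real.exp (-|x| ^ p - θ * |x| ^ (2 * p - 2)))
    (hΨ : ∀ θ : ℝ, Ψ θ =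
      (1 - β) / 2 * Real.log θ + β * Real.log (I θ) + (1 - β) * Real.log (J θ)) :
    ∃ θs : ℝ, 0 < θs ∧ (∀ θ ∈ Set.Ioi (0 : ℝ), Ψ θ ≤ Ψ θs) ∧
      (∀ θ ∈ Set.Ioi (0 : ℝ), (∀ θ' ∈ Set.Ioi (0 : ℝ), Ψ θ' ≤ Ψ θ) → θ = θs) ∧
      (∀ θ ∈ Set.Ioi (0 : ℝ),
        ((∀ θ' ∈ Set.Ioi (0 : ℝ), Ψ θ' ≤ Ψ θ) ↔
          θ * J θ / I θ = (1 - β) * p / (2 * (p - 1) * β))) := by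
  obtain rfl : I = moment p 0 := funext fun θ => by simp [hI, moment, weight]
  obtain rfl : J = moment p (p - 2) := funext fun θ => hJ θ
  obtain rfl : Ψ = phase p β := funext hΨ
  obtain ⟨θs, hθs, hzero⟩ := exists_balance_eq_zero hp hβ
  have hlt {θ} (hθ : 0 < θ) (hne : θ ≠ θs) : phase p β θ < phase p β θs :=
    phase_lt_phase_of_balance_eq_zero hp hβ.1 hβ.2.le hθs hzero hθ hne
  have hmax : ∀ θ ∈ Ioi (0 : ℝ), phase p β θ ≤ phase p β θs := fun θ hθ => by
    rcases eq_or_ne θ θs with rfl | hne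
    exacts [le_rfl, (hlt hθ hne).le]
  have huniq : ∀ θ ∈ Ioi (0 : ℝ), (∀ θ' ∈ Ioi (0 : ℝ), phase p β θ' ≤ phase p β θ) → θ = θs :=
    fun θ hθ hθmax => by_contra fun hne => (hθmax θs hθs).not_gt (hlt hθ hne)
  refine ⟨θs, hθs, hmax, huniq, fun θ hθ => ?_⟩
  rw [← balance_eq_zero_iff hp hβ.1 hθ]
  refine ⟨fun hθmax => huniq θ hθ hθmax ▸ hzero, fun hθzero => ?_⟩
  rw [(balance_strictMonoOn hp hβ.1 hβ.2.le).injOn hθ hθs (hθzero.trans hzero.symm)]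
  exact hmax
end
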